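/- (Local to global.) Let θ_k < θ_j < θ_i be real types with allocations x_i, x_j, x_k ∈ X and transfers t_i, t_j, t_k ∈ ℝ. If the constraints IC[i→j] and IC[j→k] hold and x_j ≥ x_k, then IC[i→k] holds. -/

import Mathlib

/-!
Strict increasing differences make the gain from a larger allocation grow with the type, so a
deviation down to `xk ≤ xj` that type `θj` rejects is also rejected by the higher type `θi`;
chaining this with IC[i→j] gives IC[i→k].
-/

section IncreasingDifferences

variable {α β : Type*} [PartialOrder α] [PartialOrder β] {X : Set α} {u : α → β → ℝ}

theorem sub_le_sub_of_strictIncreasingDifferences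
    (hSID : ∀ x ∈ X, ∀ x' ∈ X, x < x' → ∀ θ θ' : β, θ < θ' →
      u x' θ - u x θ < u x' θ' - u x θ')
    {x x' : α} (hx : x ∈ X) (hx' : x' ∈ X) (hxx' : x ≤ x') {θ θ' : β} (hθθ' : θ ≤ θ') :
    u x' θ - u x θ ≤ u x' θ' - u x θ' := by
  rcases hxx'.eq_or_lt with rfl | hlt
  · simp
  rcases hθθ'.eq_or_lt with rfl | hθlt
  · rfl
  exact (hSID x hx x' hx' hlt θ θ' hθlt).le

theorem ic_of_le_of_strictIncreasingDifferences
    (hSID : ∀ x ∈ X, ∀ x' ∈ X, x < x' → ∀ θ θ' : β, θ < θ' →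
      u x' θ - u x θ < u x' θ' - u x θ')
    {x x' : α} (hx : x ∈ X) (hx' : x' ∈ X) (hxx' : x ≤ x') {θ θ' : β} (hθθ' : θ ≤ θ')
    {t t' : ℝ} (hIC : u x' θ - t' ≥ u x θ - t) :
    u x' θ' - t' ≥ u x θ' - t := by
  have := sub_le_sub_of_strictIncreasingDifferences hSID hx hx' hxx' hθθ'
  linarith

end IncreasingDifferences

theorem stmt8
    (X : Set ℝ) (u : ℝ → ℝ → ℝ)
    (hSID : ∀ x ∈ X, ∀ x' ∈ X, x < x' → ∀ θ θ' : ℝ, θ < θ' →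
      u x' θ - u x θ < u x' θ' - u x θ')
    (θi θj : ℝ) (hji : θj < θi)
    (xi xj xk : ℝ) (hxj : xj ∈ X) (hxk : xk ∈ X)
    (ti tj tk : ℝ)
    (hICij : u xi θi - ti ≥ u xj θi - tj)
    (hICjk : u xj θj - tj ≥ u xk θj - tk)
    (hx : xj ≥ xk) :
    u xi θi - ti ≥ u xk θi - tk := by
  have hICjk' : u xj θi - tj ≥ u xk θi - tk :=
    ic_of_le_of_strictIncreasingDifferences hSID hxk hxj hx hji.le hICjk
  linarith
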